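/- Let E be a finite-dimensional real normed vector space and C : E → E a C^∞ map such that the induced multiplication ∘ is associative with identity e. Then the operator ad e is a ∘-derivation: for all smooth vector fields Y, Z one has [e, Y∘Z] = [e,Y]∘Z + Y∘[e,Z]. -/

import Mathlib

open ContDiff

variable {E : Type*} [NormedAddCommGroup E] [NormedSpace ℝ E]

/-- Lie bracket of vector fields on a normed space:
`[X,Y](p) = (DY)(p)(X(p)) - (DX)(p)(Y(p))`. -/
noncomputable def lieB (X Y : E → E) : E → E :=
  fun p => fderiv ℝ Y p (X p) - fderiv ℝ X p (Y p)

/-- Multiplication on vector fields induced by a vector potential `C`: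
`(X ∘ Y)(p) = (D²C)(p)(X(p), Y(p))`. -/
noncomputable def mulC (C : E → E) (X Y : E → E) : E → E :=
  fun p => fderiv ℝ (fderiv ℝ C) p (X p) (Y p)

/-- The Hertling–Manin expression `P_X(Z,W) = [X, Z∘W] - [X,Z]∘W - Z∘[X,W]`. -/
noncomputable def hmP (C : E → E) (X Z W : E → E) : E → E :=
  fun p => lieB X (mulC C Z W) p - mulC C (lieB X Z) W p - mulC C Z (lieB X W) p
/-!
Write `B = D²C` and `T = D³C`; both are symmetric. Differentiating `B(e, v) = v` gives
`B(De x, v) = -T(x, e, v)`, hence `De w = -T(w, e, e)`, and with the symmetry of `T` this turns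
`[e, Y∘Z] - [e,Y]∘Z - Y∘[e,Z]` into `T(Y∘Z, e, e) - T(e, Y, Z)`. Differentiating associativity and
setting its last argument to `e` shows that `T(x, ·, e)` is `B`-linear, so `T(x, y, e) = (x∘y)∘c`
with `c = T(e, e, e)`; both remaining terms are therefore `(Y∘Z)∘c`.
-/

section UnitalAlgebra

-- `mul` and `t` play the roles of `D²C(p)` and `D³C(p)` at a fixed point `p`.
variable {M : Type*} [AddCancelCommMonoid M] {mul : M → M → M} {t : M → M → M → M} {e : M}

theorem apply_unit_eq_of_deriv_assoc (hcomm : ∀ u v, mul u v = mul v u)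
    (hunit : ∀ v, mul e v = v)
    (hdassoc : ∀ x u v w, t x (mul u v) w + mul (t x u v) w = t x u (mul v w) + mul u (t x v w))
    (x y : M) : t x y e = mul y (t x e e) := by
  have h := hdassoc x y e e
  rwa [hcomm y e, hcomm (t x y e) e, hunit, hunit, hunit, add_comm, add_left_cancel_iff] at h

theorem apply_unit_eq_mul (hcomm : ∀ u v, mul u v = mul v u)
    (hassoc : ∀ u v w, mul (mul u v) w = mul u (mul v w)) (hunit : ∀ v, mul e v = v)
    (ht : ∀ x u v, t x u v = t u x v)
    (hdassoc : ∀ x u v w, t x (mul u v) w + mul (t x u v) w = t x u (mul v w) + mul u (t x v w))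
    (x y : M) : t x y e = mul (mul x y) (t e e e) := by
  rw [apply_unit_eq_of_deriv_assoc hcomm hunit hdassoc, ht x e e,
    apply_unit_eq_of_deriv_assoc hcomm hunit hdassoc, ← hassoc, hcomm y x]

theorem apply_mul_unit_unit (hcomm : ∀ u v, mul u v = mul v u)
    (hassoc : ∀ u v w, mul (mul u v) w = mul u (mul v w)) (hunit : ∀ v, mul e v = v)
    (ht₁₂ : ∀ x u v, t x u v = t u x v) (ht₂₃ : ∀ x u v, t x u v = t x v u)
    (hdassoc : ∀ x u v w, t x (mul u v) w + mul (t x u v) w = t x u (mul v w) + mul u (t x v w))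
    (y z : M) : t (mul y z) e e = t e y z := by
  have key := apply_unit_eq_mul hcomm hassoc hunit ht₁₂ hdassoc
  calc t (mul y z) e e = mul (mul (mul y z) e) (t e e e) := key _ _
    _ = t y z e := by rw [hcomm (mul y z) e, hunit (mul y z), key y z]
    _ = t e y z := by rw [ht₂₃, ht₁₂]

end UnitalAlgebra

section VectorPotential

variable {C : E → E}

theorem fderiv_fderiv_apply_comm {F : Type*} [NormedAddCommGroup F] [NormedSpace ℝ F]
    {f : E → F} (hf : ContDiff ℝ 2 f) (p u v : E) :
    fderiv ℝ (fderiv ℝ f) p u v = fderiv ℝ (fderiv ℝ f) p v u :=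
  (hf.contDiffAt.isSymmSndFDerivAt (by simp)).eq u v

theorem differentiable_fderiv_fderiv (hC : ContDiff ℝ 3 C) :
    Differentiable ℝ (fderiv ℝ (fderiv ℝ C)) :=
  ((hC.fderiv_right (m := 2) (by norm_num)).fderiv_right (m := 1) (by norm_num)).differentiable
    (by simp)

theorem differentiableAt_mulC (hC : ContDiff ℝ 3 C) {X W : E → E} {q : E}
    (hX : DifferentiableAt ℝ X q) (hW : DifferentiableAt ℝ W q) :
    DifferentiableAt ℝ (mulC C X W) q :=
  ((differentiable_fderiv_fderiv hC q).clm_apply hX).clm_apply hW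

theorem fderiv_mulC (hC : ContDiff ℝ 3 C) {X W : E → E} {q : E}
    (hX : DifferentiableAt ℝ X q) (hW : DifferentiableAt ℝ W q) (x : E) :
    fderiv ℝ (mulC C X W) q x
      = fderiv ℝ (fderiv ℝ (fderiv ℝ C)) q x (X q) (W q)
        + fderiv ℝ (fderiv ℝ C) q (fderiv ℝ X q x) (W q)
        + fderiv ℝ (fderiv ℝ C) q (X q) (fderiv ℝ W q x) := by
  have hB := differentiable_fderiv_fderiv hC q
  unfold mulC
  rw [fderiv_clm_apply (hB.clm_apply hX) hW, fderiv_clm_apply hB hX]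
  simp only [_root_.add_apply, ContinuousLinearMap.comp_apply, ContinuousLinearMap.flip_apply]
  abel

theorem fderiv_mulC_const (hC : ContDiff ℝ 3 C) (u v q x : E) :
    fderiv ℝ (mulC C (fun _ => u) (fun _ => v)) q x
      = fderiv ℝ (fderiv ℝ (fderiv ℝ C)) q x u v := by
  simp [fderiv_mulC hC (differentiableAt_const u) (differentiableAt_const v)]

theorem fderiv_fderiv_fderiv_apply_comm₁₂ (hC : ContDiff ℝ 3 C) (q x u v : E) :
    fderiv ℝ (fderiv ℝ (fderiv ℝ C)) q x u v = fderiv ℝ (fderiv ℝ (fderiv ℝ C)) q u x v := by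
  rw [fderiv_fderiv_apply_comm (hC.fderiv_right (m := 2) (by norm_num)) q x u]

theorem fderiv_fderiv_fderiv_apply_comm₂₃ (hC : ContDiff ℝ 3 C) (q x u v : E) :
    fderiv ℝ (fderiv ℝ (fderiv ℝ C)) q x u v = fderiv ℝ (fderiv ℝ (fderiv ℝ C)) q x v u := by
  have hcomm : mulC C (fun _ => u) (fun _ => v) = mulC C (fun _ => v) (fun _ => u) :=
    funext fun r => fderiv_fderiv_apply_comm (hC.of_le (by norm_num)) r u v
  rw [← fderiv_mulC_const hC, hcomm, fderiv_mulC_const hC]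

theorem fderiv_fderiv_fderiv_assoc (hC : ContDiff ℝ 3 C)
    (hassoc : ∀ p u v w : E,
      fderiv ℝ (fderiv ℝ C) p (fderiv ℝ (fderiv ℝ C) p u v) w
        = fderiv ℝ (fderiv ℝ C) p u (fderiv ℝ (fderiv ℝ C) p v w))
    (q x u v w : E) :
    fderiv ℝ (fderiv ℝ (fderiv ℝ C)) q x (fderiv ℝ (fderiv ℝ C) q u v) w
        + fderiv ℝ (fderiv ℝ C) q (fderiv ℝ (fderiv ℝ (fderiv ℝ C)) q x u v) w
      = fderiv ℝ (fderiv ℝ (fderiv ℝ C)) q x u (fderiv ℝ (fderiv ℝ C) q v w)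
        + fderiv ℝ (fderiv ℝ C) q u (fderiv ℝ (fderiv ℝ (fderiv ℝ C)) q x v w) := by
  have h := congrArg (fderiv ℝ · q x) (funext fun r => hassoc r u v w :
    mulC C (mulC C (fun _ => u) (fun _ => v)) (fun _ => w)
      = mulC C (fun _ => u) (mulC C (fun _ => v) (fun _ => w)))
  have hconst (a : E) : DifferentiableAt ℝ (fun _ : E => a) q := differentiableAt_const a
  simp only at h
  rw [fderiv_mulC hC (differentiableAt_mulC hC (hconst u) (hconst v)) (hconst w),
    fderiv_mulC hC (hconst u) (differentiableAt_mulC hC (hconst v) (hconst w)),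
    fderiv_mulC_const hC, fderiv_mulC_const hC] at h
  simpa [mulC] using h

theorem fderiv_fderiv_unit_apply {e : E → E} (hC : ContDiff ℝ 3 C) {q : E}
    (he : DifferentiableAt ℝ e q) (hid : ∀ p v : E, fderiv ℝ (fderiv ℝ C) p (e p) v = v)
    (x v : E) :
    fderiv ℝ (fderiv ℝ C) q (fderiv ℝ e q x) v = - fderiv ℝ (fderiv ℝ (fderiv ℝ C)) q x (e q) v := by
  have h := fderiv_mulC hC he (differentiableAt_const v) x
  rw [show mulC C e (fun _ => v) = fun _ => v from funext fun r => hid r v] at h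
  simp only [fderiv_fun_const, Pi.zero_apply, _root_.zero_apply, map_zero,
    add_zero] at h
  exact eq_neg_of_add_eq_zero_right h.symm

theorem fderiv_unit {e : E → E} (hC : ContDiff ℝ 3 C) {q : E}
    (he : DifferentiableAt ℝ e q) (hid : ∀ p v : E, fderiv ℝ (fderiv ℝ C) p (e p) v = v) (w : E) :
    fderiv ℝ e q w = - fderiv ℝ (fderiv ℝ (fderiv ℝ C)) q w (e q) (e q) :=
  calc fderiv ℝ e q w = fderiv ℝ (fderiv ℝ C) q (e q) (fderiv ℝ e q w) := (hid q _).symm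
    _ = fderiv ℝ (fderiv ℝ C) q (fderiv ℝ e q w) (e q) :=
      fderiv_fderiv_apply_comm (hC.of_le (by norm_num)) q _ _
    _ = _ := fderiv_fderiv_unit_apply hC he hid w (e q)

end VectorPotential

theorem stmt11_general {E : Type*} [NormedAddCommGroup E] [NormedSpace ℝ E]
    (C : E → E) (hC : ContDiff ℝ ∞ C)
    (hassoc : ∀ p u v w : E,
      fderiv ℝ (fderiv ℝ C) p (fderiv ℝ (fderiv ℝ C) p u v) w
        = fderiv ℝ (fderiv ℝ C) p u (fderiv ℝ (fderiv ℝ C) p v w))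
    (e : E → E) (he : ContDiff ℝ ∞ e)
    (hid : ∀ p v : E, fderiv ℝ (fderiv ℝ C) p (e p) v = v) :
    ∀ Y Z : E → E, ContDiff ℝ ∞ Y → ContDiff ℝ ∞ Z →
      lieB e (mulC C Y Z)
        = fun p => mulC C (lieB e Y) Z p + mulC C Y (lieB e Z) p := by
  intro Y Z hY hZ
  funext p
  have hC3 : ContDiff ℝ 3 C := hC.of_le (WithTop.coe_le_coe.2 le_top)
  have hdiff {X : E → E} (hX : ContDiff ℝ ∞ X) : DifferentiableAt ℝ X p :=
    hX.differentiable (by simp) p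
  have hC2 : ContDiff ℝ 2 C := hC.of_le (WithTop.coe_le_coe.2 le_top)
  have hBcomm := fderiv_fderiv_apply_comm hC2 p
  have hT₁₂ := fderiv_fderiv_fderiv_apply_comm₁₂ hC3 p
  have hT₂₃ := fderiv_fderiv_fderiv_apply_comm₂₃ hC3 p
  have key := apply_mul_unit_unit hBcomm (hassoc p) (hid p) hT₁₂ hT₂₃ (fderiv_fderiv_fderiv_assoc hC3 hassoc p)
    (Y p) (Z p)
  have hDeY := fderiv_fderiv_unit_apply hC3 (hdiff he) hid (Y p) (Z p)
  have hDeZ := fderiv_fderiv_unit_apply hC3 (hdiff he) hid (Z p) (Y p)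
  rw [hT₁₂] at hDeY
  rw [← hBcomm, hT₁₂, hT₂₃] at hDeZ
  rw [lieB, fderiv_mulC hC3 (hdiff hY) (hdiff hZ), fderiv_unit hC3 (hdiff he) hid]
  simp only [mulC, lieB, map_sub, sub_apply]
  rw [key, hDeY, hDeZ]
  abel

/-- `ad e` is a `∘`-derivation. -/
theorem stmt11 {E : Type*} [NormedAddCommGroup E] [NormedSpace ℝ E] [FiniteDimensional ℝ E]
    (C : E → E) (hC : ContDiff ℝ ∞ C)
    (hassoc : ∀ p u v w : E,
      fderiv ℝ (fderiv ℝ C) p (fderiv ℝ (fderiv ℝ C) p u v) w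
        = fderiv ℝ (fderiv ℝ C) p u (fderiv ℝ (fderiv ℝ C) p v w))
    (e : E → E) (he : ContDiff ℝ ∞ e)
    (hid : ∀ p v : E, fderiv ℝ (fderiv ℝ C) p (e p) v = v) :
    ∀ Y Z : E → E, ContDiff ℝ ∞ Y → ContDiff ℝ ∞ Z →
      lieB e (mulC C Y Z)
        = fun p => mulC C (lieB e Y) Z p + mulC C Y (lieB e Z) p :=
  stmt11_general C hC hassoc e he hid
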